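/- Let W be a Banach space, V ⊂ W an open set, F ∈ C²(V, ℝ) with F̂ := inf_{v∈V} F(v) finite. Suppose there exist τ₀, a₀, C₀ ∈ (0,∞) and a minimizing sequence (v_k) ⊂ V such that for all τ ∈ (−τ₀, τ₀), all φ in the closed unit ball of W, and all k: v_k + τφ ∈ V and ‖F''(v_k + τφ)‖ ≤ C₀/(1 − |τ| a₀)². Then ‖F'(v_k)‖_{W'} → 0 as k → ∞. -/

import Mathlib

/-!
Near each `v k` the second derivative is bounded by `M := 4 C₀` on a ball of fixed radius `ρ`
(choose `ρ a₀ ≤ 1/2`), so the mean value inequality gives the one-sided Taylor bound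
`F (v k - t φ) ≤ F (v k) - t F'(v k) φ + M t²` for `t ≤ ρ` and `‖φ‖ ≤ 1`. Since `F ≥ F̂` this yields
`‖F'(v k)‖ ≤ (F (v k) - F̂) / t + M t`; letting first `k → ∞` and then `t → 0` gives the claim.
-/

open Set Filter Topology Metric

theorem ContinuousLinearMap.norm_le_of_forall_norm_le_one_apply_le {E : Type*}
    [NormedAddCommGroup E] [NormedSpace ℝ E] {L : E →L[ℝ] ℝ} {c : ℝ}
    (h : ∀ φ : E, ‖φ‖ ≤ 1 → L φ ≤ c) : ‖L‖ ≤ c := by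
  have hc : 0 ≤ c := by simpa using h 0 (by simp)
  refine L.opNorm_le_of_unit_norm hc fun x hx => abs_le.2 ⟨?_, h x hx.le⟩
  have := h (-x) (by rw [norm_neg, hx])
  rw [map_neg] at this
  linarith

section Taylor

variable {E G : Type*} [NormedAddCommGroup E] [NormedSpace ℝ E]
  [NormedAddCommGroup G] [NormedSpace ℝ G]

theorem norm_image_sub_sub_fderiv_le_of_norm_fderiv_fderiv_le {f : E → G} {x y : E} {r M : ℝ}
    (hf : ∀ z ∈ closedBall x r, DifferentiableAt ℝ f z)
    (hf' : ∀ z ∈ closedBall x r, DifferentiableAt ℝ (fderiv ℝ f) z)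
    (hM : ∀ z ∈ closedBall x r, ‖fderiv ℝ (fderiv ℝ f) z‖ ≤ M) (hy : y ∈ closedBall x r) :
    ‖f y - f x - fderiv ℝ f x (y - x)‖ ≤ M * r * ‖y - x‖ := by
  have hx : x ∈ closedBall x r := mem_closedBall_self (dist_nonneg.trans hy)
  have hM₀ : 0 ≤ M := (norm_nonneg (fderiv ℝ (fderiv ℝ f) x)).trans (hM x hx)
  have hlip : ∀ z ∈ closedBall x r, ‖fderiv ℝ f z - fderiv ℝ f x‖ ≤ M * r := fun z hz =>
    calc ‖fderiv ℝ f z - fderiv ℝ f x‖ ≤ M * ‖z - x‖ :=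
          (convex_closedBall x r).norm_image_sub_le_of_norm_fderiv_le hf' hM hx hz
      _ ≤ M * r := by gcongr; exact mem_closedBall_iff_norm.1 hz
  exact (convex_closedBall x r).norm_image_sub_le_of_norm_fderiv_le' hf hlip hx hy

end Taylor

theorem norm_fderiv_le_of_le_image_closedBall {E : Type*} [NormedAddCommGroup E]
    [NormedSpace ℝ E] {f : E → ℝ} {x : E} {r M m : ℝ} (hr : 0 < r)
    (hf : ∀ z ∈ closedBall x r, DifferentiableAt ℝ f z)
    (hf' : ∀ z ∈ closedBall x r, DifferentiableAt ℝ (fderiv ℝ f) z)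
    (hM : ∀ z ∈ closedBall x r, ‖fderiv ℝ (fderiv ℝ f) z‖ ≤ M)
    (hm : ∀ z ∈ closedBall x r, m ≤ f z) :
    ‖fderiv ℝ f x‖ ≤ (f x - m) / r + M * r := by
  refine ContinuousLinearMap.norm_le_of_forall_norm_le_one_apply_le fun φ hφ => ?_
  have hstep : ‖x - r • φ - x‖ ≤ r := by
    rw [sub_sub_cancel_left, norm_neg, norm_smul, Real.norm_of_nonneg hr.le]
    exact mul_le_of_le_one_right hr.le hφ
  have hy : x - r • φ ∈ closedBall x r := mem_closedBall_iff_norm.2 hstep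
  have hM₀ : 0 ≤ M :=
    (norm_nonneg (fderiv ℝ (fderiv ℝ f) x)).trans (hM x (mem_closedBall_self hr.le))
  have htaylor : f (x - r • φ) - f x - fderiv ℝ f x (x - r • φ - x) ≤ M * r * r :=
    (le_abs_self _).trans <|
      (norm_image_sub_sub_fderiv_le_of_norm_fderiv_fderiv_le hf hf' hM hy).trans (by gcongr)
  rw [sub_sub_cancel_left, map_neg, map_smul, smul_eq_mul] at htaylor
  rw [div_add' _ _ _ hr.ne', le_div_iff₀ hr]
  linarith [hm _ hy]

theorem tendsto_zero_of_forall_le_div_add_mul {ι : Type*} {l : Filter ι} {a b : ι → ℝ}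
    {ρ M : ℝ} (hρ : 0 < ρ) (hM : 0 ≤ M) (ha : ∀ k, 0 ≤ a k) (hb : Tendsto b l (𝓝 0))
    (hab : ∀ k, ∀ t, 0 < t → t ≤ ρ → a k ≤ b k / t + M * t) : Tendsto a l (𝓝 0) := by
  rw [Metric.tendsto_nhds]
  intro ε hε
  set t := min ρ (ε / (2 * (M + 1))) with ht_def
  have ht : 0 < t := lt_min hρ (by positivity)
  have hMt : M * t < ε / 2 := by
    calc M * t ≤ M * (ε / (2 * (M + 1))) := by gcongr; exact min_le_right _ _
      _ < ε / 2 := by rw [mul_div_assoc', div_lt_div_iff₀ (by positivity) two_pos]; nlinarith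
  filter_upwards [(tendsto_order.1 hb).2 (t * (ε / 2)) (by positivity)] with k hk
  have hbt : b k / t < ε / 2 := by rwa [div_lt_iff₀' ht]
  rw [Real.dist_0_eq_abs, abs_of_nonneg (ha k)]
  linarith [hab k t ht (min_le_left _ _)]

theorem exists_norm_le_one_eq_add_smul_of_mem_closedBall {E : Type*} [NormedAddCommGroup E]
    [NormedSpace ℝ E] {x y : E} {r : ℝ} (hr : 0 < r) (hy : y ∈ closedBall x r) :
    ∃ φ : E, ‖φ‖ ≤ 1 ∧ y = x + r • φ := by
  refine ⟨r⁻¹ • (y - x), ?_, ?_⟩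
  · rw [norm_smul, norm_inv, Real.norm_of_nonneg hr.le, inv_mul_le_one₀ hr]
    exact mem_closedBall_iff_norm.1 hy
  · rw [smul_smul, mul_inv_cancel₀ hr.ne', one_smul, add_sub_cancel]

theorem stmt_2_general {W : Type*} [NormedAddCommGroup W] [NormedSpace ℝ W]
    (V : Set W) (hV : IsOpen V) (F : W → ℝ) (hF : ContDiffOn ℝ 2 F V)
    (Fhat : ℝ) (hglb : IsGLB (F '' V) Fhat)
    (τ₀ a₀ C₀ : ℝ) (hτ₀ : 0 < τ₀) (ha₀ : 0 < a₀) (hC₀ : 0 < C₀)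
    (v : ℕ → W)
    (hmin : Tendsto (fun k => F (v k)) atTop (𝓝 Fhat))
    (hmem : ∀ τ : ℝ, |τ| < τ₀ → ∀ φ : W, ‖φ‖ ≤ 1 → ∀ k, v k + τ • φ ∈ V)
    (hbd : ∀ τ : ℝ, |τ| < τ₀ → ∀ φ : W, ‖φ‖ ≤ 1 → ∀ k,
      ‖fderiv ℝ (fderiv ℝ F) (v k + τ • φ)‖ ≤ C₀ / (1 - |τ| * a₀) ^ 2) :
    Tendsto (fun k => ‖fderiv ℝ F (v k)‖) atTop (𝓝 0) := by
  set ρ := min (τ₀ / 2) (1 / (2 * a₀))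
  have hρ : 0 < ρ := lt_min (by positivity) (by positivity)
  have hρτ : |ρ| < τ₀ := by rw [abs_of_pos hρ]; linarith [min_le_left (τ₀ / 2) (1 / (2 * a₀))]
  have hρa : ρ * a₀ ≤ 1 / 2 :=
    calc ρ * a₀ ≤ 1 / (2 * a₀) * a₀ := by gcongr; exact min_le_right _ _
      _ = 1 / 2 := by field_simp
  have hball : ∀ k, ∀ y ∈ closedBall (v k) ρ, y ∈ V ∧ ‖fderiv ℝ (fderiv ℝ F) y‖ ≤ 4 * C₀ := by
    intro k y hy
    obtain ⟨φ, hφ, rfl⟩ := exists_norm_le_one_eq_add_smul_of_mem_closedBall hρ hy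
    refine ⟨hmem ρ hρτ φ hφ k, (hbd ρ hρτ φ hφ k).trans ?_⟩
    have hsq : 1 / 4 ≤ (1 - ρ * a₀) ^ 2 := by nlinarith
    rw [abs_of_pos hρ, div_le_iff₀ (by linarith)]
    nlinarith
  have hdiff : ∀ x ∈ V, DifferentiableAt ℝ F x ∧ DifferentiableAt ℝ (fderiv ℝ F) x := fun x hx =>
    have hFx := hF.contDiffAt (hV.mem_nhds hx)
    ⟨hFx.differentiableAt two_ne_zero,
      (hFx.fderiv_right (m := 1) (by norm_num)).differentiableAt one_ne_zero⟩
  have hderiv_bound : ∀ k t, 0 < t → t ≤ ρ →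
      ‖fderiv ℝ F (v k)‖ ≤ (F (v k) - Fhat) / t + 4 * C₀ * t := by
    intro k t ht htρ
    have hsub := closedBall_subset_closedBall (x := v k) htρ
    exact norm_fderiv_le_of_le_image_closedBall ht
      (fun z hz => (hdiff z (hball k z (hsub hz)).1).1)
      (fun z hz => (hdiff z (hball k z (hsub hz)).1).2)
      (fun z hz => (hball k z (hsub hz)).2)
      (fun z hz => hglb.1 (mem_image_of_mem F (hball k z (hsub hz)).1))
  exact tendsto_zero_of_forall_le_div_add_mul hρ (by positivity) (fun _ => norm_nonneg _)
    (tendsto_sub_nhds_zero_iff.2 hmin) hderiv_bound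

/-- Ekeland-type principle for C² functionals (Theorem A.1 / `thm:Ek`). -/
theorem stmt_2 {W : Type*} [NormedAddCommGroup W] [NormedSpace ℝ W]
    (V : Set W) (hV : IsOpen V) (F : W → ℝ) (hF : ContDiffOn ℝ 2 F V)
    (Fhat : ℝ) (hglb : IsGLB (F '' V) Fhat)
    (τ₀ a₀ C₀ : ℝ) (hτ₀ : 0 < τ₀) (ha₀ : 0 < a₀) (hC₀ : 0 < C₀)
    (v : ℕ → W) (hvV : ∀ k, v k ∈ V)
    (hmin : Tendsto (fun k => F (v k)) atTop (𝓝 Fhat))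
    (hmem : ∀ τ : ℝ, |τ| < τ₀ → ∀ φ : W, ‖φ‖ ≤ 1 → ∀ k, v k + τ • φ ∈ V)
    (hbd : ∀ τ : ℝ, |τ| < τ₀ → ∀ φ : W, ‖φ‖ ≤ 1 → ∀ k,
      ‖fderiv ℝ (fderiv ℝ F) (v k + τ • φ)‖ ≤ C₀ / (1 - |τ| * a₀) ^ 2) :
    Tendsto (fun k => ‖fderiv ℝ F (v k)‖) atTop (𝓝 0) :=
  stmt_2_general V hV F hF Fhat hglb τ₀ a₀ C₀ hτ₀ ha₀ hC₀ v hmin hmem hbd
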